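/- Let G be a finite simple graph and f a uniformly random labeling with fixed label counts. For pairwise distinct labels i, j, k, Cov(R_{ij}, R_{ik}) = (sum_t |G_t|^2 - 2|G|) * n_i n_j n_k/(N(N-1)(N-2)) + (|G|^2 - sum_t |G_t|^2 + |G|) * 4 n_i n_j n_k (n_i - 1)/(N(N-1)(N-2)(N-3)) - E(R_{ij}) E(R_{ik}). -/

import Mathlib

open Finset

variable {V : Type*} [Fintype V] [DecidableEq V] {K : ℕ}

/-- The set of labelings `f : V → Fin K` with exactly `n k` vertices labeled `k`. -/
def labelings (n : Fin K → ℕ) : Finset (V → Fin K) :=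
  Finset.univ.filter fun f => ∀ k, (Finset.univ.filter fun x => f x = k).card = n k

/-- Probability of an event under the uniform distribution on `labelings n`. -/
noncomputable def prob (n : Fin K → ℕ) (P : (V → Fin K) → Prop) [DecidablePred P] : ℝ :=
  (((labelings n).filter P).card : ℝ) / (((labelings n : Finset (V → Fin K))).card : ℝ)

/-- Expectation of a real random variable under the uniform distribution on `labelings n`. -/
noncomputable def expect (n : Fin K → ℕ) (X : (V → Fin K) → ℝ) : ℝ :=
  (∑ f ∈ labelings n, X f) / (((labelings n : Finset (V → Fin K))).card : ℝ)

/-- Covariance under the uniform distribution on `labelings n`. -/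
noncomputable def covar (n : Fin K → ℕ) (X Y : (V → Fin K) → ℝ) : ℝ :=
  expect n (fun f => (X f - expect n X) * (Y f - expect n Y))

/-- `Rcount G f i j` is the number of edges of `G` whose endpoint labels (under `f`)
are exactly the unordered pair `{i, j}`. -/
def Rcount (G : SimpleGraph V) [DecidableRel G.Adj] (f : V → Fin K) (i j : Fin K) : ℕ :=
  (G.edgeFinset.filter fun e => Sym2.map f e = s(i, j)).card

/-!
Vertex permutations preserve the set of labelings and act transitively on `r`-tuples of distinct
vertices, so the probability that such a tuple carries a prescribed label pattern depends only on
the pattern. Double counting pairs (tuple, labeling) evaluates it as `∏ₗ (n l)_{mₗ} / (N)_r`, with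
`mₗ` the multiplicity of `l` in the pattern and `(x)_r` the falling factorial.

`R_{ij} R_{ik}` counts ordered pairs of edges `(e, e')` with `e` labeled `{i, j}` and `e'` labeled
`{i, k}`. Equal edges never qualify since `j ≠ k`. The `∑ₜ dₜ² - 2|G|` pairs of distinct edges
through a common vertex need that vertex labeled `i`, which gives `nᵢ nⱼ nₖ / (N)₃`. The remaining
`|G|² - ∑ₜ dₜ² + |G|` disjoint pairs give `4 nᵢ (nᵢ - 1) nⱼ nₖ / (N)₄`, the factor 4 choosing the
endpoints labeled `i`.
-/

theorem Nat.cast_descFactorial_eq_prod_range {S : Type*} [CommRing S] (a k : ℕ) :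
    (a.descFactorial k : S) = ∏ t ∈ range k, ((a : S) - t) := by
  induction k with
  | zero => simp
  | succ k ih =>
    rw [Nat.descFactorial_succ, prod_range_succ, ← ih, Nat.cast_mul, mul_comm]
    rcases le_or_gt k a with hk | hk
    · rw [Nat.cast_sub hk]
    · simp [Nat.descFactorial_eq_zero_iff_lt.mpr hk]

theorem Sym2.map_mk_eq_mk_iff {α β : Type*} (f : α → β) (a b : α) (x y : β) :
    Sym2.map f s(a, b) = s(x, y) ↔ f a = x ∧ f b = y ∨ f b = x ∧ f a = y := by
  rw [Sym2.map_mk, Sym2.eq_iff, and_comm (a := f a = y)]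

def Function.Embedding.overEquivPiFiber {α β γ : Type*} (f : β → γ) (c : α → γ) :
    {b : α ↪ β // ∀ s, f (b s) = c s} ≃ ((l : γ) → {s // c s = l} ↪ {x // f x = l}) where
  toFun b l :=
    ⟨fun s => ⟨b.1 s, (b.2 s).trans s.2⟩,
      fun s t h => Subtype.ext (b.1.injective (congrArg Subtype.val h))⟩
  invFun φ :=
    ⟨⟨fun s => φ (c s) ⟨s, rfl⟩, fun s t (h : (φ (c s) ⟨s, rfl⟩ : β) = φ (c t) ⟨t, rfl⟩) => by
        have hst : c s = c t :=
          (φ (c s) ⟨s, rfl⟩).2.symm.trans ((congrArg f h).trans (φ (c t) ⟨t, rfl⟩).2)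
        have transport : ∀ l (hl : c s = l), (φ (c s) ⟨s, rfl⟩ : β) = φ l ⟨s, hl⟩ := by
          rintro _ rfl; rfl
        rw [transport (c t) hst] at h
        exact congrArg Subtype.val ((φ (c t)).injective (Subtype.ext h))⟩,
      fun s => (φ (c s) ⟨s, rfl⟩).2⟩
  left_inv _ := rfl
  right_inv φ := by
    funext l
    ext ⟨s, rfl⟩
    rfl

theorem SimpleGraph.card_offDiag_edgeFinset_filter_exists_mem (G : SimpleGraph V)
    [DecidableRel G.Adj] :
    #{q ∈ G.edgeFinset.offDiag | ∃ v, v ∈ q.1 ∧ v ∈ q.2}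
      = ∑ v, (G.degree v * G.degree v - G.degree v) := by
  have hunion : {q ∈ G.edgeFinset.offDiag | ∃ v, v ∈ q.1 ∧ v ∈ q.2}
      = univ.biUnion fun v => (G.incidenceFinset v).offDiag := by
    ext q
    simp only [mem_filter, mem_offDiag, mem_biUnion, mem_univ, true_and,
      SimpleGraph.mem_incidenceFinset, SimpleGraph.incidenceSet, Set.mem_sep_iff,
      SimpleGraph.mem_edgeFinset]
    grind
  rw [hunion, card_biUnion]
  · simp [SimpleGraph.card_incidenceFinset_eq_degree]
  · intro v _ w _ hvw
    refine Finset.disjoint_left.mpr fun q hv hw => ?_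
    simp only [mem_offDiag, SimpleGraph.mem_incidenceFinset, SimpleGraph.incidenceSet,
      Set.mem_sep_iff] at hv hw
    -- two distinct edges meet in at most one vertex
    exact hv.2.2 (((Sym2.mem_and_mem_iff hvw).mp ⟨hv.1.2, hw.1.2⟩).trans
      ((Sym2.mem_and_mem_iff hvw).mp ⟨hv.2.1.2, hw.2.1.2⟩).symm)

section Labelings

variable {n : Fin K → ℕ}

theorem mem_labelings {f : V → Fin K} :
    f ∈ (labelings n : Finset (V → Fin K)) ↔ ∀ k, #{x | f x = k} = n k := by
  simp [labelings]

theorem labelings_nonempty (hsum : ∑ k, n k = Fintype.card V) :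
    (labelings n : Finset (V → Fin K)).Nonempty := by
  have hcard : Fintype.card V = Fintype.card (Σ k : Fin K, Fin (n k)) := by simp [hsum]
  obtain ⟨e⟩ := Fintype.card_eq.mp hcard
  refine ⟨fun x => (e x).1, mem_labelings.mpr fun k => ?_⟩
  rw [← Fintype.card_subtype, ← Fintype.card_fin (n k)]
  exact Fintype.card_congr ((e.subtypeEquiv fun _ => Iff.rfl).trans (Equiv.sigmaSubtype k))

theorem comp_perm_mem_labelings (σ : Equiv.Perm V) {f : V → Fin K}
    (hf : f ∈ (labelings n : Finset (V → Fin K))) :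
    f ∘ σ ∈ (labelings n : Finset (V → Fin K)) := by
  rw [mem_labelings] at hf ⊢
  intro k
  rw [← hf k]
  exact Finset.card_equiv σ (by simp)

theorem card_filter_labelings_comp_perm (σ : Equiv.Perm V) (P : (V → Fin K) → Prop)
    [DecidablePred P] :
    #{f ∈ (labelings n : Finset (V → Fin K)) | P (f ∘ σ)}
      = #{f ∈ (labelings n : Finset (V → Fin K)) | P f} := by
  refine Finset.card_nbij' (· ∘ σ) (· ∘ σ.symm) ?_ ?_ ?_ ?_
  · intro f hf
    simp only [mem_coe, mem_filter] at hf ⊢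
    exact ⟨comp_perm_mem_labelings σ hf.1, hf.2⟩
  · intro f hf
    simp only [mem_coe, mem_filter] at hf ⊢
    refine ⟨comp_perm_mem_labelings σ.symm hf.1, ?_⟩
    simpa [Function.comp_assoc] using hf.2
  · intro f _; ext; simp
  · intro f _; ext; simp

variable {α : Type*} [Fintype α]

theorem card_embeddings_pattern {f : V → Fin K} (hf : f ∈ (labelings n : Finset (V → Fin K)))
    (c : α → Fin K) :
    Fintype.card {b : α ↪ V // ∀ s, f (b s) = c s}
      = ∏ l, (n l).descFactorial (Fintype.card {s // c s = l}) := by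
  rw [Fintype.card_congr (Function.Embedding.overEquivPiFiber f c), Fintype.card_pi]
  refine prod_congr rfl fun l _ => ?_
  rw [Fintype.card_embedding_eq, Fintype.card_subtype, mem_labelings.mp hf l]

theorem descFactorial_mul_card_labelings_pattern (a : α ↪ V) (c : α → Fin K) :
    (Fintype.card V).descFactorial (Fintype.card α)
        * #{f ∈ (labelings n : Finset (V → Fin K)) | ∀ s, f (a s) = c s}
      = #(labelings n : Finset (V → Fin K))
        * ∏ l, (n l).descFactorial (Fintype.card {s // c s = l}) := by
  classical
  calc (Fintype.card V).descFactorial (Fintype.card α)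
        * #{f ∈ (labelings n : Finset (V → Fin K)) | ∀ s, f (a s) = c s}
      = ∑ b : α ↪ V, #{f ∈ (labelings n : Finset (V → Fin K)) | ∀ s, f (b s) = c s} := by
        rw [← Fintype.card_embedding_eq, ← card_univ, ← smul_eq_mul, ← sum_const]
        refine sum_congr rfl fun b _ => ?_
        obtain ⟨σ, hσ⟩ := Equiv.Perm.exists_extending_pair a b a.injective b.injective
        rw [← card_filter_labelings_comp_perm σ]
        simp [hσ]
    _ = ∑ f ∈ (labelings n : Finset (V → Fin K)), #{b : α ↪ V | ∀ s, f (b s) = c s} := by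
        simp only [card_filter]
        exact sum_comm
    _ = ∑ _f ∈ (labelings n : Finset (V → Fin K)),
          ∏ l, (n l).descFactorial (Fintype.card {s // c s = l}) :=
        sum_congr rfl fun f hf => by rw [← Fintype.card_subtype, card_embeddings_pattern hf]
    _ = _ := by rw [sum_const, smul_eq_mul]

end Labelings

section Probability

variable {n : Fin K → ℕ}

theorem prob_congr {P Q : (V → Fin K) → Prop} [DecidablePred P] [DecidablePred Q]
    (h : ∀ f, P f ↔ Q f) : prob n P = prob n Q := by
  obtain rfl : P = Q := funext fun f => propext (h f)
  congr

theorem prob_or {P Q : (V → Fin K) → Prop} [DecidablePred P] [DecidablePred Q]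
    (h : ∀ f, P f → ¬ Q f) : prob n (fun f => P f ∨ Q f) = prob n P + prob n Q := by
  rw [prob, prob, prob, ← add_div, filter_or,
    card_union_of_disjoint (disjoint_filter.mpr fun f _ => h f), Nat.cast_add]

theorem prob_or_and_or {P₁ P₂ Q₁ Q₂ : (V → Fin K) → Prop} [DecidablePred P₁] [DecidablePred P₂]
    [DecidablePred Q₁] [DecidablePred Q₂]
    (hP : ∀ f, P₁ f → ¬ P₂ f) (hQ : ∀ f, Q₁ f → ¬ Q₂ f) :
    prob n (fun f => (P₁ f ∨ P₂ f) ∧ (Q₁ f ∨ Q₂ f))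
      = prob n (fun f => P₁ f ∧ Q₁ f) + prob n (fun f => P₁ f ∧ Q₂ f)
        + (prob n (fun f => P₂ f ∧ Q₁ f) + prob n (fun f => P₂ f ∧ Q₂ f)) := by
  rw [prob_congr fun f => or_and_right.trans (or_congr and_or_left and_or_left),
    prob_or, prob_or, prob_or]
  · exact fun f h₂ h₂' => hQ f h₂.2 h₂'.2
  · exact fun f h₁ h₁' => hQ f h₁.2 h₁'.2
  · rintro f (h | h) (h' | h') <;> exact hP f h.1 h'.1

theorem expect_card_filter {α : Type*} (s : Finset α) (P : α → (V → Fin K) → Prop)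
    [∀ x, DecidablePred (P x)] :
    expect n (fun f => (#{x ∈ s | P x f} : ℝ)) = ∑ x ∈ s, prob n (P x) := by
  simp only [_root_.expect, prob, ← sum_div]
  congr 1
  simp only [card_filter, Nat.cast_sum]
  exact sum_comm

theorem covar_eq_expect_mul_sub (X Y : (V → Fin K) → ℝ) :
    covar n X Y = expect n (fun f => X f * Y f) - expect n X * expect n Y := by
  simp only [covar, _root_.expect]
  set T : ℝ := ((#(labelings n : Finset (V → Fin K)) : ℕ) : ℝ)
  rcases eq_or_ne T 0 with hT | hT
  · simp [hT]
  simp only [sub_mul, mul_sub, sum_sub_distrib, ← sum_mul, ← mul_sum, sum_const, nsmul_eq_mul]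
  field_simp
  ring

theorem prob_pattern {α : Type*} [Fintype α] (hsum : ∑ k, n k = Fintype.card V) (a : α ↪ V)
    (c : α → Fin K) :
    prob n (fun f => ∀ s, f (a s) = c s)
      = (∏ l, (n l).descFactorial (Fintype.card {s // c s = l}) : ℕ)
        / ((Fintype.card V).descFactorial (Fintype.card α) : ℕ) := by
  have hL : (#(labelings n : Finset (V → Fin K)) : ℝ) ≠ 0 := by
    exact_mod_cast (labelings_nonempty hsum).card_pos.ne'
  have hV : ((Fintype.card V).descFactorial (Fintype.card α) : ℝ) ≠ 0 := by
    exact_mod_cast (Nat.descFactorial_eq_zero_iff_lt.not.mpr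
      (Fintype.card_le_of_embedding a).not_gt)
  rw [prob, div_eq_div_iff hL hV]
  exact_mod_cast (mul_comm _ _).trans
    ((descFactorial_mul_card_labelings_pattern a c).trans (mul_comm _ _))

theorem prob_two_vertices (hsum : ∑ k, n k = Fintype.card V) {a b : V} (hab : a ≠ b)
    {i j : Fin K} (hij : i ≠ j) :
    prob n (fun f => f a = i ∧ f b = j)
      = n i * n j / (Fintype.card V * (Fintype.card V - 1)) := by
  have hinj : Function.Injective ![a, b] := by
    intro s t; fin_cases s <;> fin_cases t <;> simp [hab, hab.symm]
  have hcount : ∏ l, (n l).descFactorial (Fintype.card {s // ![i, j] s = l}) = n i * n j := by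
    simp only [Fintype.card_subtype, card_filter, Fin.sum_univ_succ, Fin.sum_univ_zero]
    rw [← prod_subset (subset_univ {i, j}), prod_insert (by simp [hij]), prod_singleton]
    · simp [hij, hij.symm]
    · intro l _ hl
      simp only [mem_insert, mem_singleton, not_or] at hl
      simp [Ne.symm hl.1, Ne.symm hl.2]
  convert prob_pattern hsum (⟨![a, b], hinj⟩ : Fin 2 ↪ V) ![i, j] using 2
  · ext f; simp [Fin.forall_fin_two]
  · rw [hcount, Nat.cast_mul]
  · rw [Fintype.card_fin, Nat.cast_descFactorial_two]

theorem prob_three_vertices (hsum : ∑ k, n k = Fintype.card V) {a b c : V} (hab : a ≠ b)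
    (hac : a ≠ c) (hbc : b ≠ c) {i j k : Fin K} (hij : i ≠ j) (hik : i ≠ k) (hjk : j ≠ k) :
    prob n (fun f => f a = i ∧ f b = j ∧ f c = k)
      = n i * n j * n k / (Fintype.card V * (Fintype.card V - 1) * (Fintype.card V - 2)) := by
  have hinj : Function.Injective ![a, b, c] := by
    intro s t
    fin_cases s <;> fin_cases t <;> simp [hab, hac, hbc, hab.symm, hac.symm, hbc.symm]
  have hcount : ∏ l, (n l).descFactorial (Fintype.card {s // ![i, j, k] s = l})
      = n i * n j * n k := by
    simp only [Fintype.card_subtype, card_filter, Fin.sum_univ_succ, Fin.sum_univ_zero]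
    rw [← prod_subset (subset_univ {i, j, k}), prod_insert (by simp [hij, hik]),
      prod_insert (by simp [hjk]), prod_singleton]
    · simp [hij, hik, hjk, hij.symm, hik.symm, hjk.symm, mul_assoc]
    · intro l _ hl
      simp only [mem_insert, mem_singleton, not_or] at hl
      simp [Ne.symm hl.1, Ne.symm hl.2.1, Ne.symm hl.2.2]
  convert prob_pattern hsum (⟨![a, b, c], hinj⟩ : Fin 3 ↪ V) ![i, j, k] using 2
  · ext f; simp [Fin.forall_fin_succ]
  · rw [hcount, Nat.cast_mul, Nat.cast_mul]
  · rw [Fintype.card_fin, Nat.cast_descFactorial_eq_prod_range]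
    simp [prod_range_succ]

theorem prob_four_vertices (hsum : ∑ k, n k = Fintype.card V) {a b c d : V} (hab : a ≠ b)
    (hac : a ≠ c) (had : a ≠ d) (hbc : b ≠ c) (hbd : b ≠ d) (hcd : c ≠ d)
    {i j k : Fin K} (hij : i ≠ j) (hik : i ≠ k) (hjk : j ≠ k) :
    prob n (fun f => (f a = i ∧ f b = j) ∧ (f c = i ∧ f d = k))
      = n i * (n i - 1) * n j * n k / (Fintype.card V * (Fintype.card V - 1)
          * (Fintype.card V - 2) * (Fintype.card V - 3)) := by
  have hinj : Function.Injective ![a, c, b, d] := by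
    intro s t
    fin_cases s <;> fin_cases t <;>
      simp [hab, hac, had, hbc, hbd, hcd, hab.symm, hac.symm, had.symm, hbc.symm, hbd.symm,
        hcd.symm]
  have hcount : ∏ l, (n l).descFactorial (Fintype.card {s // ![i, i, j, k] s = l})
      = (n i).descFactorial 2 * n j * n k := by
    simp only [Fintype.card_subtype, card_filter, Fin.sum_univ_succ, Fin.sum_univ_zero]
    rw [← prod_subset (subset_univ {i, j, k}), prod_insert (by simp [hij, hik]),
      prod_insert (by simp [hjk]), prod_singleton]
    · simp [hij, hik, hjk, hij.symm, hik.symm, hjk.symm, mul_assoc]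
    · intro l _ hl
      simp only [mem_insert, mem_singleton, not_or] at hl
      simp [Ne.symm hl.1, Ne.symm hl.2.1, Ne.symm hl.2.2]
  convert prob_pattern hsum (⟨![a, c, b, d], hinj⟩ : Fin 4 ↪ V) ![i, i, j, k] using 2
  · ext f; simp [Fin.forall_fin_succ]; tauto
  · rw [hcount, Nat.cast_mul, Nat.cast_mul, Nat.cast_descFactorial_two]
  · rw [Fintype.card_fin, Nat.cast_descFactorial_eq_prod_range]
    simp [prod_range_succ]

end Probability

section Edges

variable {n : Fin K → ℕ}

theorem prob_map_edge (hsum : ∑ k, n k = Fintype.card V) {a b : V} (hab : a ≠ b)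
    {i j : Fin K} (hij : i ≠ j) :
    prob n (fun f => Sym2.map f s(a, b) = s(i, j))
      = 2 * (n i * n j / (Fintype.card V * (Fintype.card V - 1))) := by
  rw [prob_congr fun f => Sym2.map_mk_eq_mk_iff f a b i j,
    prob_or fun f h h' => hij (h.1.symm.trans h'.2), prob_two_vertices hsum hab hij,
    prob_two_vertices hsum hab.symm hij]
  ring

theorem prob_map_eq_and_map_eq (e : Sym2 V) {i j k : Fin K} (hjk : j ≠ k) :
    prob n (fun f => Sym2.map f e = s(i, j) ∧ Sym2.map f e = s(i, k)) = 0 := by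
  rw [prob_congr (Q := fun _ => False) fun f => iff_false_intro fun ⟨h, h'⟩ =>
    hjk (Sym2.congr_right.mp (h.symm.trans h'))]
  simp [prob]

theorem prob_map_adjacent_edges (hsum : ∑ k, n k = Fintype.card V) {v u w : V} (hvu : v ≠ u)
    (hvw : v ≠ w) (huw : u ≠ w) {i j k : Fin K} (hij : i ≠ j) (hik : i ≠ k) (hjk : j ≠ k) :
    prob n (fun f => Sym2.map f s(v, u) = s(i, j) ∧ Sym2.map f s(v, w) = s(i, k))
      = n i * n j * n k / (Fintype.card V * (Fintype.card V - 1) * (Fintype.card V - 2)) := by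
  rw [← prob_three_vertices hsum hvu hvw huw hij hik hjk]
  refine prob_congr fun f => ?_
  rw [Sym2.map_mk_eq_mk_iff, Sym2.map_mk_eq_mk_iff]
  grind

theorem prob_map_disjoint_edges (hsum : ∑ k, n k = Fintype.card V) {a b c d : V} (hab : a ≠ b)
    (hac : a ≠ c) (had : a ≠ d) (hbc : b ≠ c) (hbd : b ≠ d) (hcd : c ≠ d)
    {i j k : Fin K} (hij : i ≠ j) (hik : i ≠ k) (hjk : j ≠ k) :
    prob n (fun f => Sym2.map f s(a, b) = s(i, j) ∧ Sym2.map f s(c, d) = s(i, k))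
      = 4 * (n i * (n i - 1) * n j * n k / (Fintype.card V * (Fintype.card V - 1)
          * (Fintype.card V - 2) * (Fintype.card V - 3))) := by
  simp only [Sym2.map_mk_eq_mk_iff]
  rw [prob_or_and_or (fun f h h' => hij (h.1.symm.trans h'.2))
      (fun f h h' => hik (h.1.symm.trans h'.2)),
    prob_four_vertices hsum hab hac had hbc hbd hcd hij hik hjk,
    prob_four_vertices hsum hab had hac hbd hbc hcd.symm hij hik hjk,
    prob_four_vertices hsum hab.symm hbc hbd hac had hcd hij hik hjk,
    prob_four_vertices hsum hab.symm hbd hbc had hac hcd.symm hij hik hjk]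
  ring

theorem prob_map_edge_pair_of_ne (G : SimpleGraph V) [DecidableRel G.Adj]
    (hsum : ∑ k, n k = Fintype.card V) {e e' : Sym2 V} (he : e ∈ G.edgeFinset)
    (he' : e' ∈ G.edgeFinset) (hne : e ≠ e') {i j k : Fin K} (hij : i ≠ j) (hik : i ≠ k)
    (hjk : j ≠ k) :
    prob n (fun f => Sym2.map f e = s(i, j) ∧ Sym2.map f e' = s(i, k))
      = if ∃ v, v ∈ e ∧ v ∈ e' then
          (n i : ℝ) * n j * n k / (Fintype.card V * (Fintype.card V - 1) * (Fintype.card V - 2))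
        else 4 * ((n i : ℝ) * (n i - 1) * n j * n k / (Fintype.card V * (Fintype.card V - 1)
          * (Fintype.card V - 2) * (Fintype.card V - 3))) := by
  rw [SimpleGraph.mem_edgeFinset] at he he'
  split_ifs with hshare
  · obtain ⟨v, hv, hv'⟩ := hshare
    obtain ⟨u, rfl⟩ := Sym2.mem_iff_exists.mp hv
    obtain ⟨w, rfl⟩ := Sym2.mem_iff_exists.mp hv'
    have huw : u ≠ w := by rintro rfl; exact hne rfl
    exact prob_map_adjacent_edges hsum (G.ne_of_adj he) (G.ne_of_adj he') huw hij hik hjk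
  · induction e with | _ a b =>
    induction e' with | _ c d =>
    simp only [Sym2.mem_iff, not_exists, not_and, not_or] at hshare
    exact prob_map_disjoint_edges hsum (G.ne_of_adj he) (hshare a (.inl rfl)).1
      (hshare a (.inl rfl)).2 (hshare b (.inr rfl)).1 (hshare b (.inr rfl)).2 (G.ne_of_adj he')
      hij hik hjk

end Edges

section Moments

variable {n : Fin K → ℕ} (G : SimpleGraph V) [DecidableRel G.Adj]

theorem expect_Rcount (hsum : ∑ k, n k = Fintype.card V) {i j : Fin K} (hij : i ≠ j) :
    expect n (fun f => (Rcount G f i j : ℝ))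
      = #G.edgeFinset * (2 * (n i * n j / (Fintype.card V * (Fintype.card V - 1)))) := by
  simp only [Rcount]
  rw [expect_card_filter, sum_congr rfl fun e he => ?_, sum_const, nsmul_eq_mul]
  induction e with
  | _ a b => exact prob_map_edge hsum (G.ne_of_adj (SimpleGraph.mem_edgeFinset.mp he)) hij

theorem expect_Rcount_mul_Rcount (hsum : ∑ k, n k = Fintype.card V) {i j k : Fin K}
    (hij : i ≠ j) (hik : i ≠ k) (hjk : j ≠ k) :
    expect n (fun f => (Rcount G f i j : ℝ) * Rcount G f i k)
      = (∑ v, (G.degree v : ℝ) ^ 2 - 2 * #G.edgeFinset)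
          * (n i * n j * n k / (Fintype.card V * (Fintype.card V - 1) * (Fintype.card V - 2)))
        + ((#G.edgeFinset : ℝ) ^ 2 - ∑ v, (G.degree v : ℝ) ^ 2 + #G.edgeFinset)
          * (4 * (n i * (n i - 1) * n j * n k / (Fintype.card V * (Fintype.card V - 1)
              * (Fintype.card V - 2) * (Fintype.card V - 3)))) := by
  set share : Sym2 V × Sym2 V → Prop := fun q => ∃ v, v ∈ q.1 ∧ v ∈ q.2
  have hshare : (#{q ∈ G.edgeFinset.offDiag | share q} : ℝ)
      = ∑ v, (G.degree v : ℝ) ^ 2 - 2 * #G.edgeFinset := by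
    have handshake : ∑ v, (G.degree v : ℝ) = 2 * #G.edgeFinset := by
      exact_mod_cast G.sum_degrees_eq_twice_card_edges
    rw [G.card_offDiag_edgeFinset_filter_exists_mem, Nat.cast_sum,
      sum_congr rfl fun v _ => Nat.cast_sub (Nat.le_mul_self _), sum_sub_distrib]
    simp only [← sq, Nat.cast_pow, handshake]
  have hdisjoint : (#{q ∈ G.edgeFinset.offDiag | ¬ share q} : ℝ)
      = (#G.edgeFinset : ℝ) ^ 2 - ∑ v, (G.degree v : ℝ) ^ 2 + #G.edgeFinset := by
    have htotal := card_filter_add_card_filter_not (s := G.edgeFinset.offDiag) share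
    rw [offDiag_card] at htotal
    have hcast := congrArg (Nat.cast : ℕ → ℝ) htotal
    rw [Nat.cast_add, Nat.cast_sub (Nat.le_mul_self _), Nat.cast_mul, hshare] at hcast
    linear_combination hcast
  have hprod : ∀ f : V → Fin K, (Rcount G f i j : ℝ) * Rcount G f i k
      = #{q ∈ G.edgeFinset ×ˢ G.edgeFinset |
          Sym2.map f q.1 = s(i, j) ∧ Sym2.map f q.2 = s(i, k)} := by
    intro f
    rw [Rcount, Rcount, ← Nat.cast_mul, ← card_product, ← filter_product]
  have hdiag : ∀ q ∈ G.edgeFinset.diag,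
      prob n (fun f => Sym2.map f q.1 = s(i, j) ∧ Sym2.map f q.2 = s(i, k)) = 0 := by
    intro q hq
    rw [← (mem_diag.mp hq).2]
    exact prob_map_eq_and_map_eq q.1 hjk
  have hoffDiag : ∀ q ∈ G.edgeFinset.offDiag,
      prob n (fun f => Sym2.map f q.1 = s(i, j) ∧ Sym2.map f q.2 = s(i, k))
        = if share q then
            (n i : ℝ) * n j * n k / (Fintype.card V * (Fintype.card V - 1) * (Fintype.card V - 2))
          else 4 * ((n i : ℝ) * (n i - 1) * n j * n k / (Fintype.card V * (Fintype.card V - 1)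
            * (Fintype.card V - 2) * (Fintype.card V - 3))) := by
    intro q hq
    rw [mem_offDiag] at hq
    exact prob_map_edge_pair_of_ne G hsum hq.1 hq.2.1 hq.2.2 hij hik hjk
  simp only [hprod]
  rw [expect_card_filter, ← diag_union_offDiag, sum_union (disjoint_diag_offDiag _),
    sum_eq_zero hdiag, zero_add, sum_congr rfl hoffDiag, sum_ite, sum_const, sum_const,
    nsmul_eq_mul, nsmul_eq_mul, hshare, hdisjoint]

end Moments

theorem stmt_13_general (G : SimpleGraph V) [DecidableRel G.Adj]
    (n : Fin K → ℕ) (N : ℕ) (hN : N = Fintype.card V)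
    (hsum : ∑ k, n k = N) (i j k : Fin K) (hij : i ≠ j) (hik : i ≠ k) (hjk : j ≠ k)
    (m D : ℝ) (hm : m = (G.edgeFinset.card : ℝ))
    (hD : D = ∑ t : V, (G.degree t : ℝ) ^ 2) :
    covar n (fun f : V → Fin K => (Rcount G f i j : ℝ))
        (fun f : V → Fin K => (Rcount G f i k : ℝ))
      = (D - 2 * m) * ((n i : ℝ) * (n j : ℝ) * (n k : ℝ)
            / ((N : ℝ) * ((N : ℝ) - 1) * ((N : ℝ) - 2)))
        + (m ^ 2 - D + m) * (4 * (n i : ℝ) * (n j : ℝ) * (n k : ℝ) * ((n i : ℝ) - 1)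
            / ((N : ℝ) * ((N : ℝ) - 1) * ((N : ℝ) - 2) * ((N : ℝ) - 3)))
        - (2 * m * (n i : ℝ) * (n j : ℝ) / ((N : ℝ) * ((N : ℝ) - 1)))
          * (2 * m * (n i : ℝ) * (n k : ℝ) / ((N : ℝ) * ((N : ℝ) - 1))) := by
  subst hN hm hD
  rw [covar_eq_expect_mul_sub, expect_Rcount_mul_Rcount G hsum hij hik hjk,
    expect_Rcount G hsum hij, expect_Rcount G hsum hik]
  ring

theorem stmt_13 (G : SimpleGraph V) [DecidableRel G.Adj]
    (n : Fin K → ℕ) (N : ℕ) (hN : N = Fintype.card V) (hN4 : 4 ≤ N)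
    (hsum : ∑ k, n k = N) (i j k : Fin K) (hij : i ≠ j) (hik : i ≠ k) (hjk : j ≠ k)
    (m D : ℝ) (hm : m = (G.edgeFinset.card : ℝ))
    (hD : D = ∑ t : V, (G.degree t : ℝ) ^ 2) :
    covar n (fun f : V → Fin K => (Rcount G f i j : ℝ))
        (fun f : V → Fin K => (Rcount G f i k : ℝ))
      = (D - 2 * m) * ((n i : ℝ) * (n j : ℝ) * (n k : ℝ)
            / ((N : ℝ) * ((N : ℝ) - 1) * ((N : ℝ) - 2)))
        + (m ^ 2 - D + m) * (4 * (n i : ℝ) * (n j : ℝ) * (n k : ℝ) * ((n i : ℝ) - 1)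
            / ((N : ℝ) * ((N : ℝ) - 1) * ((N : ℝ) - 2) * ((N : ℝ) - 3)))
        - (2 * m * (n i : ℝ) * (n j : ℝ) / ((N : ℝ) * ((N : ℝ) - 1)))
          * (2 * m * (n i : ℝ) * (n k : ℝ) / ((N : ℝ) * ((N : ℝ) - 1))) :=
  stmt_13_general G n N hN hsum i j k hij hik hjk m D hm hD
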